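/- Let H be an infinite-dimensional separable Hilbert space and let A ∈ L(H) be a non-compact bounded linear operator. Then for every bounded linear operator B on H, the set S(A, B) = {(X, Y) ∈ L(H) × L(H) : X ∘ A ∘ Y = B} of all solutions of the equation XAY = B is dense in L(H) × L(H) with respect to the product of the strong operator topologies. -/

import Mathlib

/-!
Non-compactness of `A` gives `δ > 0` such that the orthogonal complement of every
finite-dimensional subspace contains a unit vector `x` with `‖A x‖ ≥ δ` (otherwise `A` is a norm
limit of the finite-rank operators `A P_G`). Choosing such vectors recursively yields an
orthonormal sequence `eₙ` with the `A eₙ` pairwise orthogonal and orthogonal to a prescribed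
finite-dimensional subspace `F₀`; by Pythagoras `A` is bounded below by `δ` on the closed span
of the `eₙ`, which is an isometric copy `V(H)` of `H`.

Given finitely many test vectors spanning `M`, put `Y' = Y P_M + η V` with `F₀ = M + A Y (M)`.
Then `Y'` is `η`-close to `Y` on the test vectors, and `L = A Y'` is bounded below because its
`F₀ᗮ`-component is `η A V`. Hence `L` has closed range meeting `M` only in `0`, so some `X'`
equals `B L⁻¹` on the range of `L` and `X` on `M`, and then `X' A Y' = B`.
-/

open Filter Topology Metric
open Submodule
open scoped InnerProductSpace

theorem mem_closure_prod_of_forall_finset {α β : Type*} [PseudoMetricSpace β]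
    {S : Set ((α → β) × (α → β))} {f g : α → β}
    (h : ∀ (I : Finset α) (ε : ℝ), 0 < ε →
      ∃ p ∈ S, ∀ x ∈ I, dist (p.1 x) (f x) < ε ∧ dist (p.2 x) (g x) < ε) :
    (f, g) ∈ closure S := by
  classical
  rw [mem_closure_iff_nhds, nhds_prod_eq]
  intro U hU
  obtain ⟨u, hu, v, hv, huv⟩ := Filter.mem_prod_iff.1 hU
  rw [nhds_pi, Filter.mem_pi'] at hu hv
  obtain ⟨I, s, hs, hsu⟩ := hu
  obtain ⟨J, t, ht, htv⟩ := hv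
  have hsmall : ∀ᶠ ε in 𝓝[>] (0 : ℝ), ∀ x ∈ I ∪ J, ball (f x) ε ⊆ s x ∧ ball (g x) ε ⊆ t x :=
    (eventually_all_finset _).2 fun x _ =>
      ((eventually_ball_subset (hs x)).and (eventually_ball_subset (ht x))).filter_mono
        nhdsWithin_le_nhds
  obtain ⟨ε, hεU, hε⟩ := (hsmall.and self_mem_nhdsWithin).exists
  obtain ⟨p, hpS, hp⟩ := h (I ∪ J) ε hε
  refine ⟨p, huv ⟨hsu fun x hx => ?_, htv fun x hx => ?_⟩, hpS⟩
  · have hx : x ∈ I ∪ J := Finset.mem_union_left _ hx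
    exact (hεU x hx).1 (hp x hx).1
  · have hx : x ∈ I ∪ J := Finset.mem_union_right _ hx
    exact (hεU x hx).2 (hp x hx).2

theorem exists_comp_eq_and_eqOn_of_antilipschitz {𝕜 D F G : Type*} [RCLike 𝕜]
    [NormedAddCommGroup D] [NormedSpace 𝕜 D] [CompleteSpace D]
    [NormedAddCommGroup F] [InnerProductSpace 𝕜 F] [CompleteSpace F]
    [NormedAddCommGroup G] [NormedSpace 𝕜 G]
    {L : D →L[𝕜] F} {K : NNReal} (hL : AntilipschitzWith K L) {N : Submodule 𝕜 F}
    [FiniteDimensional 𝕜 N] (hLN : Disjoint (L : D →ₗ[𝕜] F).range N) (B : D →L[𝕜] G)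
    (X : F →L[𝕜] G) : ∃ X' : F →L[𝕜] G, X' ∘L L = B ∧ ∀ x ∈ N, X' x = X x := by
  set T : D × N →L[𝕜] F := L.coprod N.subtypeL
  have hinj : Function.Injective T := by
    refine (injective_iff_map_eq_zero T).2 fun ⟨h, n⟩ hT => ?_
    have hLh : L h = -(n : F) := eq_neg_of_add_eq_zero_left hT
    have hLh0 : L h = 0 :=
      disjoint_def.1 hLN _ (LinearMap.mem_range_self _ h) (hLh ▸ neg_mem n.2)
    have hh : h = 0 := hL.injective (by rw [hLh0, map_zero])
    have hn : n = 0 := by simpa [hLh0] using hLh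
    simp [hh, hn]
  have hclosed : IsClosed ((T : D × N →ₗ[𝕜] F).range : Set F) := by
    have hL' : IsClosed ((L : D →ₗ[𝕜] F).range : Set F) := by
      rw [LinearMap.coe_range, ContinuousLinearMap.coe_coe]
      exact hL.isClosed_range L.uniformContinuous
    rw [ContinuousLinearMap.range_coprod]
    convert isClosed_sup_finiteDimensional _ N hL'
    exact N.range_subtype
  have : CompleteSpace (T : D × N →ₗ[𝕜] F).range := hclosed.completeSpace_coe
  obtain ⟨R, hR⟩ :=
    ContinuousLinearMap.HasLeftInverse.of_injective_of_isClosed_range_of_closedComplement_range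
      hinj (by rwa [LinearMap.coe_range] at hclosed)
      ⟨_, orthogonalProjectionOnto_mem_subspace_eq_self⟩
  refine ⟨B ∘L .fst 𝕜 D N ∘L R + X ∘L N.subtypeL ∘L .snd 𝕜 D N ∘L R, ?_, fun x hx => ?_⟩
  · ext h
    have : R (L h) = (h, 0) := by simpa [T] using hR (h, 0)
    simp [this]
  · have : R x = (0, ⟨x, hx⟩) := by simpa [T] using hR (0, ⟨x, hx⟩)
    simp [this]

section

variable {𝕜 E : Type*} [RCLike 𝕜] [NormedAddCommGroup E] [InnerProductSpace 𝕜 E]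

theorem isCompactOperator_of_forall_norm_apply_le_on_orthogonal {F : Type*}
    [NormedAddCommGroup F] [NormedSpace 𝕜 F] [CompleteSpace F] (A : E →L[𝕜] F)
    (h : ∀ ε > 0, ∃ G : Submodule 𝕜 E, FiniteDimensional 𝕜 G ∧ ∀ x ∈ Gᗮ, ‖A x‖ ≤ ε * ‖x‖) :
    IsCompactOperator A := by
  refine isClosed_setOfPred_isCompactOperator.closure_subset (Metric.mem_closure_iff.2 ?_)
  intro ε hε
  obtain ⟨G, hG, hGA⟩ := h (ε / 2) (half_pos hε)
  refine ⟨(A ∘L G.subtypeL) ∘L G.orthogonalProjectionOnto,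
    (isCompactOperator_of_locallyCompactSpace_dom G.orthogonalProjectionOnto).clm_comp
      (A ∘L G.subtypeL), ?_⟩
  refine (dist_eq_norm A _).trans_lt <| (ContinuousLinearMap.opNorm_le_bound _ (half_pos hε).le
    fun x => ?_).trans_lt (half_lt_self hε)
  have hx : x - G.starProjection x = Gᗮ.starProjection x := (starProjection_orthogonal_val x).symm
  calc ‖A x - A (G.starProjection x)‖ = ‖A (Gᗮ.starProjection x)‖ := by rw [← map_sub, hx]
    _ ≤ ε / 2 * ‖Gᗮ.starProjection x‖ := hGA _ (starProjection_apply_mem _ x)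
    _ ≤ ε / 2 * ‖x‖ := by gcongr; exact norm_starProjection_apply_le _ x

theorem norm_sum_smul_sq_of_pairwise_inner_eq_zero {ι : Type*} {g : ι → E}
    (hg : Pairwise fun i j => ⟪g i, g j⟫_𝕜 = 0) (c : ι → 𝕜) (s : Finset ι) :
    ‖∑ i ∈ s, c i • g i‖ ^ 2 = ∑ i ∈ s, ‖c i‖ ^ 2 * ‖g i‖ ^ 2 := by
  classical
  induction s using Finset.induction_on with
  | empty => simp
  | insert i s hi ih =>
    have horth : ⟪c i • g i, ∑ j ∈ s, c j • g j⟫_𝕜 = 0 := by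
      refine (inner_sum _ _ _).trans <| Finset.sum_eq_zero fun j hj => ?_
      simp [inner_smul_left, inner_smul_right, hg (ne_of_mem_of_not_mem hj hi).symm]
    rw [Finset.sum_insert hi, Finset.sum_insert hi, ← ih, sq, sq,
      norm_add_sq_eq_norm_sq_add_norm_sq_of_inner_eq_zero _ _ horth, norm_smul]
    ring

theorem Orthonormal.countable [TopologicalSpace.SeparableSpace E] {ι : Type*} {v : ι → E}
    (hv : Orthonormal 𝕜 v) : Countable ι := by
  refine Pairwise.countable_of_isOpen_disjoint (s := fun i => ball (v i) 2⁻¹)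
    (fun i j hij => ball_disjoint_ball ?_) (fun _ => isOpen_ball)
    fun i => ⟨v i, mem_ball_self (by norm_num)⟩
  have hsq : ‖v i - v j‖ ^ 2 = 2 := by
    rw [@norm_sub_sq 𝕜, hv.1 i, hv.1 j, hv.2 hij]
    norm_num
  rw [dist_eq_norm]
  nlinarith [norm_nonneg (v i - v j)]

theorem exists_hilbertBasis_nat [CompleteSpace E] [TopologicalSpace.SeparableSpace E]
    (hE : ¬ FiniteDimensional 𝕜 E) : Nonempty (HilbertBasis ℕ 𝕜 E) := by
  obtain ⟨w, b, -⟩ := exists_hilbertBasis 𝕜 E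
  have : Countable w := b.orthonormal.countable
  have : Infinite w := by
    refine not_finite_iff_infinite.1 fun hw => hE ?_
    have : FiniteDimensional 𝕜 (span 𝕜 (Set.range b)) := .span_of_finite 𝕜 (Set.finite_range b)
    have hspan : span 𝕜 (Set.range b) = ⊤ := by
      rw [← b.dense_span,
        (span 𝕜 (Set.range b)).closed_of_finiteDimensional.submodule_topologicalClosure_eq]
    exact Module.finite_def.2 (hspan ▸ fg_span (Set.finite_range b))
  obtain ⟨q⟩ := nonempty_equiv_of_countable (α := w) (β := ℕ)
  exact ⟨HilbertBasis.mk (b.orthonormal.comp _ q.symm.injective)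
    (by rw [EquivLike.range_comp, b.dense_span])⟩

variable {F : Type*} [NormedAddCommGroup F] [InnerProductSpace 𝕜 F]

theorem HilbertBasis.exists_linearIsometry_mem_closure_span {ι : Type*} (b : HilbertBasis ι 𝕜 E)
    [CompleteSpace F] {v : ι → F} (hv : Orthonormal 𝕜 v) :
    ∃ V : E →ₗᵢ[𝕜] F, ∀ x, V x ∈ (span 𝕜 (Set.range v)).topologicalClosure := by
  refine ⟨hv.orthogonalFamily.linearIsometry.comp b.repr.toLinearIsometry, fun x => ?_⟩
  refine mem_closure_of_tendsto (hv.orthogonalFamily.hasSum_linearIsometry (b.repr x))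
    (Filter.Eventually.of_forall fun s => sum_mem fun i _ => ?_)
  simpa using smul_mem _ (b.repr x i) (subset_span (Set.mem_range_self i))

theorem mul_norm_le_norm_apply_of_mem_closure_span {ι : Type*} (T : E →L[𝕜] F) {e : ι → E}
    (he : Pairwise fun i j => ⟪e i, e j⟫_𝕜 = 0)
    (hTe : Pairwise fun i j => ⟪T (e i), T (e j)⟫_𝕜 = 0)
    {δ : ℝ} (hδ : 0 ≤ δ) (hbound : ∀ i, δ * ‖e i‖ ≤ ‖T (e i)‖) {v : E}
    (hv : v ∈ (span 𝕜 (Set.range e)).topologicalClosure) : δ * ‖v‖ ≤ ‖T v‖ := by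
  have hclosed : IsClosed {v : E | δ * ‖v‖ ≤ ‖T v‖} :=
    isClosed_le (continuous_const.mul continuous_norm) T.continuous.norm
  refine closure_minimal (fun v hv => ?_) hclosed hv
  obtain ⟨c, rfl⟩ := Finsupp.mem_span_range_iff_exists_finsupp.1 hv
  have hsq : (δ * ‖c.sum fun i a => a • e i‖) ^ 2 ≤ ‖T (c.sum fun i a => a • e i)‖ ^ 2 := by
    simp only [Finsupp.sum, map_sum, map_smul, mul_pow,
      norm_sum_smul_sq_of_pairwise_inner_eq_zero he,
      norm_sum_smul_sq_of_pairwise_inner_eq_zero hTe, Finset.mul_sum]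
    refine Finset.sum_le_sum fun i _ => ?_
    have := pow_le_pow_left₀ (by positivity) (hbound i) 2
    rw [mul_pow] at this
    nlinarith [sq_nonneg ‖c i‖]
  exact (pow_le_pow_iff_left₀ (by positivity) (norm_nonneg _) two_ne_zero).1 hsq

theorem exists_orthonormal_seq_of_not_isCompactOperator [CompleteSpace E] [CompleteSpace F]
    {A : E →L[𝕜] F} (hA : ¬ IsCompactOperator A) (K : Submodule 𝕜 E) [FiniteDimensional 𝕜 K] :
    ∃ δ > 0, ∃ e : ℕ → E, Orthonormal 𝕜 e ∧ (Pairwise fun i j => ⟪A (e i), A (e j)⟫_𝕜 = 0) ∧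
      ∀ n, δ ≤ ‖A (e n)‖ ∧ e n ∈ Kᗮ := by
  obtain ⟨δ, hδ, hfar⟩ : ∃ δ > 0, ∀ G : Submodule 𝕜 E, FiniteDimensional 𝕜 G →
      ∃ x ∈ Gᗮ, δ * ‖x‖ < ‖A x‖ := by
    by_contra! h
    exact hA (isCompactOperator_of_forall_norm_apply_le_on_orthogonal A h)
  have hunit (G : Submodule 𝕜 E) [FiniteDimensional 𝕜 G] :
      ∃ x ∈ Gᗮ, ‖x‖ = 1 ∧ δ ≤ ‖A x‖ := by
    obtain ⟨x, hxG, hx⟩ := hfar G inferInstance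
    have hx0 : 0 < ‖x‖ := norm_pos_iff.2 fun h => by simp [h] at hx
    refine ⟨(‖x‖⁻¹ : 𝕜) • x, Gᗮ.smul_mem _ hxG, ?_, ?_⟩
    · simp [norm_smul, hx0.ne']
    · rw [map_smul, norm_smul, norm_inv, RCLike.norm_ofReal, abs_norm, le_inv_mul_iff₀ hx0]
      linarith
  let r : E → E → Prop := fun x y => ⟪x, y⟫_𝕜 = 0 ∧ ⟪A x, A y⟫_𝕜 = 0
  have : Std.Symm r := ⟨fun _ _ h => ⟨inner_eq_zero_symm.1 h.1, inner_eq_zero_symm.1 h.2⟩⟩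
  obtain ⟨e, he, hr⟩ := exists_seq_of_forall_finset_exists'
    (fun x => ‖x‖ = 1 ∧ δ ≤ ‖A x‖ ∧ x ∈ Kᗮ) r fun s _ => by
      -- `⟪A z, A x⟫ = ⟪A† A z, x⟫`, so it suffices that `x ⊥ A† A z`.
      let G := K ⊔ span 𝕜 (↑s ∪ (A.adjoint ∘L A) '' ↑s)
      have : FiniteDimensional 𝕜 (span 𝕜 (↑s ∪ (A.adjoint ∘L A) '' ↑s)) :=
        .span_of_finite 𝕜 (s.finite_toSet.union (s.finite_toSet.image _))
      obtain ⟨x, hxG, hx1, hxA⟩ := hunit G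
      have hperp {z : E} (hz : z ∈ G) : ⟪z, x⟫_𝕜 = 0 := inner_right_of_mem_orthogonal hz hxG
      refine ⟨x, ⟨hx1, hxA, orthogonal_le le_sup_left hxG⟩, fun z hz => ⟨?_, ?_⟩⟩
      · exact hperp (mem_sup_right (subset_span (Or.inl hz)))
      · rw [← ContinuousLinearMap.adjoint_inner_left]
        exact hperp (mem_sup_right (subset_span (Or.inr ⟨z, hz, rfl⟩)))
  exact ⟨δ, hδ, e, ⟨fun n => (he n).1, fun _ _ h => (hr h).1⟩, fun _ _ h => (hr h).2,
    fun n => (he n).2⟩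

theorem exists_linearIsometry_norm_comp_ge_and_mem_orthogonal [CompleteSpace E]
    [TopologicalSpace.SeparableSpace E] (hE : ¬ FiniteDimensional 𝕜 E) [CompleteSpace F]
    {A : E →L[𝕜] F} (hA : ¬ IsCompactOperator A) (G : Submodule 𝕜 F) [FiniteDimensional 𝕜 G] :
    ∃ V : E →ₗᵢ[𝕜] E, ∃ c > 0, ∀ x, c * ‖x‖ ≤ ‖A (V x)‖ ∧ A (V x) ∈ Gᗮ := by
  obtain ⟨δ, hδ, e, he, hAe, hAe'⟩ :=
    exists_orthonormal_seq_of_not_isCompactOperator hA (G.map A.adjoint.toLinearMap)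
  obtain ⟨b⟩ := exists_hilbertBasis_nat (𝕜 := 𝕜) hE
  obtain ⟨V, hV⟩ := b.exists_linearIsometry_mem_closure_span he
  have hW : (span 𝕜 (Set.range e)).topologicalClosure ≤ (G.map A.adjoint.toLinearMap)ᗮ :=
    topologicalClosure_minimal _ (span_le.2 (Set.range_subset_iff.2 fun n => (hAe' n).2))
      (isClosed_orthogonal _)
  refine ⟨V, δ, hδ, fun x => ⟨?_, (mem_orthogonal _ _).2 fun u hu => ?_⟩⟩
  · rw [← V.norm_map x]
    refine mul_norm_le_norm_apply_of_mem_closure_span A he.2 hAe hδ.le (fun n => ?_) (hV x)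
    rw [he.1 n, mul_one]
    exact (hAe' n).1
  · rw [← ContinuousLinearMap.adjoint_inner_left]
    exact inner_right_of_mem_orthogonal (mem_map_of_mem hu) (hW (hV x))

theorem exists_comp_comp_eq_of_not_isCompactOperator [CompleteSpace E]
    [TopologicalSpace.SeparableSpace E] (hE : ¬ FiniteDimensional 𝕜 E) [CompleteSpace F]
    {A : E →L[𝕜] F} (hA : ¬ IsCompactOperator A) {G : Type*} [NormedAddCommGroup G]
    [NormedSpace 𝕜 G] (B : E →L[𝕜] G) (X : F →L[𝕜] G) (Y : E →L[𝕜] E) (M : Submodule 𝕜 E)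
    [FiniteDimensional 𝕜 M] (N : Submodule 𝕜 F) [FiniteDimensional 𝕜 N] {η : 𝕜} (hη : η ≠ 0) :
    ∃ V : E →ₗᵢ[𝕜] E, ∃ X' : F →L[𝕜] G,
      X' ∘L A ∘L (Y ∘L M.starProjection + η • V.toContinuousLinearMap) = B ∧
        ∀ x ∈ N, X' x = X x := by
  set F₀ : Submodule 𝕜 F := N ⊔ M.map (A ∘L Y : E →ₗ[𝕜] F)
  obtain ⟨V, c, hc, hV⟩ := exists_linearIsometry_norm_comp_ge_and_mem_orthogonal hE hA F₀
  set L := A ∘L (Y ∘L M.starProjection + η • V.toContinuousLinearMap)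
  have hproj (h : E) : F₀ᗮ.starProjection (L h) = η • A (V h) := by
    refine eq_starProjection_of_mem_orthogonal' (F₀ᗮ.smul_mem η (hV h).2)
      (F₀.le_orthogonal_orthogonal (mem_sup_right (mem_map_of_mem (M.starProjection_apply_mem h))))
      ?_
    simp [L, add_comm]
  have hlow (h : E) : ‖η‖ * c * ‖h‖ ≤ ‖η • A (V h)‖ := by
    rw [norm_smul, mul_assoc]
    exact mul_le_mul_of_nonneg_left (hV h).1 (norm_nonneg η)
  have hηc : 0 < ‖η‖ * c := mul_pos (norm_pos_iff.2 hη) hc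
  have hanti : AntilipschitzWith (‖η‖ * c)⁻¹.toNNReal L := L.antilipschitz_of_bound fun h => by
    rw [Real.coe_toNNReal _ (inv_nonneg.2 hηc.le), le_inv_mul_iff₀ hηc]
    exact (hlow h).trans (hproj h ▸ norm_starProjection_apply_le _ _)
  have hdisj : Disjoint (L : E →ₗ[𝕜] F).range N := by
    refine disjoint_def.2 fun x ⟨h, hx⟩ hxN => ?_
    have h0 : η • A (V h) = 0 := by
      rw [← hproj, show L h = x from hx,
        starProjection_orthogonal_apply_eq_zero (mem_sup_left hxN)]
    have : ‖h‖ = 0 := by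
      have := hlow h
      rw [h0, norm_zero] at this
      nlinarith [norm_nonneg h]
    rw [← hx, norm_eq_zero.1 this, map_zero]
  obtain ⟨X', hX'B, hX'X⟩ := exists_comp_eq_and_eqOn_of_antilipschitz hanti hdisj B X
  exact ⟨V, X', hX'B, hX'X⟩

end

/-- If `A` is a non-compact bounded operator on an infinite-dimensional separable Hilbert
space, then for every `B` the solution set of `X A Y = B` is dense in `L(H) × L(H)` for the
product of the strong operator topologies (expressed via the embedding into
`(H → H) × (H → H)` with the product/pointwise topology). -/
theorem solutions_XAY_eq_B_SOT_dense_of_not_compact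
    {H : Type*} [NormedAddCommGroup H] [InnerProductSpace ℝ H] [CompleteSpace H]
    [TopologicalSpace.SeparableSpace H] (hH : ¬ FiniteDimensional ℝ H)
    (A : H →L[ℝ] H) (hA : ¬ IsCompactOperator A)
    (B : H →L[ℝ] H) (X Y : H →L[ℝ] H) :
    ((⇑X, ⇑Y) : (H → H) × (H → H)) ∈
      closure {p : (H → H) × (H → H) |
        ∃ X' Y' : H →L[ℝ] H, X'.comp (A.comp Y') = B ∧ p = (⇑X', ⇑Y')} := by
  refine mem_closure_prod_of_forall_finset fun I ε hε => ?_
  set M : Submodule ℝ H := span ℝ (I : Set H)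
  have hsmall : ∀ᶠ η in 𝓝[>] (0 : ℝ), ∀ x ∈ I, η * ‖x‖ < ε :=
    (eventually_all_finset I).2 fun x _ =>
      (((continuous_id.mul continuous_const).tendsto' 0 0 (zero_mul ‖x‖)).eventually
        (gt_mem_nhds hε)).filter_mono nhdsWithin_le_nhds
  obtain ⟨η, hηε, hη⟩ := (hsmall.and self_mem_nhdsWithin).exists
  obtain ⟨V, X', hX'B, hX'X⟩ :=
    exists_comp_comp_eq_of_not_isCompactOperator hH hA B X Y M M hη.ne'
  refine ⟨(X', Y ∘L M.starProjection + η • V.toContinuousLinearMap), ⟨X', _, hX'B, rfl⟩,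
    fun x hx => ⟨?_, ?_⟩⟩
  · simp [hX'X x (subset_span hx), hε]
  · have hMx : M.starProjection x = x := starProjection_eq_self_iff.2 (subset_span hx)
    simpa [dist_eq_norm, hMx, norm_smul, abs_of_pos hη] using hηε x hx
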